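/- Let f : U → V be a map in the set-up and let X be a finite union of puzzle pieces which is nice. Then for every z ∈ D(X) ∖ X and every integer i with 0 ≤ i < k(z), one has f^i(L_z(X)) ∩ X = ∅. -/

import Mathlib

open Set Function Topology

noncomputable section

/-- A (bounded) Jordan domain in the plane: a bounded connected open set whose
frontier is a Jordan curve, i.e. an injective continuous image of the circle. -/
def IsJordanDomain (Ω : Set ℂ) : Prop :=
  IsOpen Ω ∧ IsConnected Ω ∧ Bornology.IsBounded Ω ∧
  ∃ g : Metric.sphere (0:ℂ) 1 → ℂ, Continuous g ∧ Function.Injective g ∧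
    Set.range g = frontier Ω

/-- `A` is strictly contained in `X`: it is a proper subset of some connected
component of `X`. -/
def StrictlyContainedIn (A X : Set ℂ) : Prop :=
  ∃ x ∈ X, A ⊂ connectedComponentIn X x

/-- The set-up: `V ⊆ ℂ` is open with finitely many components, each a bounded Jordan
domain, with pairwise disjoint closures; `U` is open with closure contained in `V`,
with finitely many components with pairwise disjoint closures; `f : U → V` is proper
holomorphic; every critical point of `f` lies in `K_f`. -/
structure Setup where
  U : Set ℂ
  V : Set ℂ
  f : ℂ → ℂ
  hV_open : IsOpen V
  hV_comp_finite : {C : Set ℂ | ∃ x ∈ V, C = connectedComponentIn V x}.Finite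
  hV_jordan : ∀ x ∈ V, IsJordanDomain (connectedComponentIn V x)
  hV_disj : ∀ x ∈ V, ∀ y ∈ V, connectedComponentIn V x ≠ connectedComponentIn V y →
    closure (connectedComponentIn V x) ∩ closure (connectedComponentIn V y) = ∅
  hU_open : IsOpen U
  hUV : closure U ⊆ V
  hU_comp_finite : {C : Set ℂ | ∃ x ∈ U, C = connectedComponentIn U x}.Finite
  hU_disj : ∀ x ∈ U, ∀ y ∈ U, connectedComponentIn U x ≠ connectedComponentIn U y →
    closure (connectedComponentIn U x) ∩ closure (connectedComponentIn U y) = ∅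
  hf_maps : Set.MapsTo f U V
  hf_holo : DifferentiableOn ℂ f U
  hf_proper : ∀ K ⊆ V, IsCompact K → IsCompact (U ∩ f ⁻¹' K)
  hf_crit : ∀ z ∈ U, deriv f z = 0 → ∀ n : ℕ, f^[n] z ∈ U

namespace Setup

variable (S : Setup)

/-- `K_f = {z ∈ U : f^n(z) ∈ U for all n}`. -/
def K : Set ℂ := {z | z ∈ S.U ∧ ∀ n : ℕ, S.f^[n] z ∈ S.U}

/-- The set of critical points of `f`. -/
def Crit : Set ℂ := {z | z ∈ S.U ∧ deriv S.f z = 0}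

/-- `preV n = f^{-n}(V)`, preimages being taken for the partial map `f : U → V`. -/
def preV : ℕ → Set ℂ
  | 0 => S.V
  | n+1 => S.U ∩ S.f ⁻¹' (preV n)

/-- `P` is a puzzle piece of depth `n`: a connected component of `f^{-n}(V)`. -/
def IsPieceOfDepth (n : ℕ) (P : Set ℂ) : Prop :=
  ∃ x ∈ S.preV n, P = connectedComponentIn (S.preV n) x

/-- `P` is a puzzle piece. -/
def IsPiece (P : Set ℂ) : Prop := ∃ n, S.IsPieceOfDepth n P

/-- `piece n x = P_n(x)`, the puzzle piece of depth `n` containing `x`. -/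
def piece (n : ℕ) (x : ℂ) : Set ℂ := connectedComponentIn (S.preV n) x

/-- `X` is a finite union of puzzle pieces. -/
def IsPieceUnion (X : Set ℂ) : Prop :=
  ∃ P : Set (Set ℂ), P.Finite ∧ (∀ Q ∈ P, S.IsPiece Q) ∧ X = ⋃₀ P

/-- `X` is nice: for every connected component `P` of `X` and every `n ≥ 1`,
`f^n(P)` is not strictly contained in `X`. -/
def Nice (X : Set ℂ) : Prop :=
  ∀ x ∈ X, ∀ n : ℕ, 1 ≤ n →
    ¬ StrictlyContainedIn (S.f^[n] '' connectedComponentIn X x) X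

/-- `preIm X n = f^{-n}(X)`, preimages being taken for the partial map `f : U → V`. -/
def preIm (X : Set ℂ) : ℕ → Set ℂ
  | 0 => X
  | n+1 => S.U ∩ S.f ⁻¹' (preIm X n)

/-- `D(X) = ⋃_{k ≥ 0} f^{-k}(X)`. -/
def D (X : Set ℂ) : Set ℂ := ⋃ k, S.preIm X k

/-- For `z ∈ D(X) ∖ X`, `k` is the landing time `k(z)`: the minimal positive
integer with `f^k(z) ∈ X`. -/
def IsLandingTime (X : Set ℂ) (z : ℂ) (k : ℕ) : Prop :=
  1 ≤ k ∧ S.f^[k] z ∈ X ∧ ∀ j, 1 ≤ j → j < k → S.f^[j] z ∉ X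

/-- `landComp X z k = Comp_z(f^{-k}(Comp_{f^k(z)}(X)))`; for `k = k(z)` this is
`L_z(X)`. -/
def landComp (X : Set ℂ) (z : ℂ) (k : ℕ) : Set ℂ :=
  connectedComponentIn (S.preIm (connectedComponentIn X (S.f^[k] z)) k) z

/-- `x` combinatorially accumulates to `y`: for every `n ≥ 0` there is `j ≥ 1`
with `f^j(x) ∈ P_n(y)`. -/
def Acc (x y : ℂ) : Prop := ∀ n : ℕ, ∃ j : ℕ, 1 ≤ j ∧ S.f^[j] x ∈ S.piece n y

/-- `Forw(x) = {y ∈ K_f : x → y}`. -/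
def Forw (x : ℂ) : Set ℂ := {y | y ∈ S.K ∧ S.Acc x y}

/-- The equivalence `c1 ∼ c2` on critical points. -/
def Equiv (c1 c2 : ℂ) : Prop := c1 = c2 ∨ (S.Acc c1 c2 ∧ S.Acc c2 c1)

/-- The class `[c]` of a critical point `c`. -/
def cls (c : ℂ) : Set ℂ := {c' | c' ∈ S.Crit ∧ S.Equiv c c'}

/-- `D(f) = Crit(f)/∼`, the set of equivalence classes. -/
def classes : Set (Set ℂ) := {A | ∃ c ∈ S.Crit, A = S.cls c}

/-- `[c1] → [c2]`. -/
def ClassAcc (A B : Set ℂ) : Prop := ∃ c1 ∈ A, ∃ c2 ∈ B, S.Acc c1 c2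

/-- The partial order on classes: `A ≤ B` iff `A = B` or `B → A`. -/
def ClassLe (A B : Set ℂ) : Prop := A = B ∨ S.ClassAcc B A

/-- The minimal elements of a family of classes w.r.t. `ClassLe`. -/
def minimalsIn (T : Set (Set ℂ)) : Set (Set ℂ) :=
  {A | A ∈ T ∧ ∀ B ∈ T, S.ClassLe B A → B = A}

/-- Auxiliary: `(D_k(f), D_0(f) ∪ ⋯ ∪ D_k(f))`. -/
def DlevelAux : ℕ → Set (Set ℂ) × Set (Set ℂ)
  | 0 => (S.minimalsIn S.classes, S.minimalsIn S.classes)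
  | k+1 =>
      (S.minimalsIn (S.classes \ (DlevelAux k).2),
        (DlevelAux k).2 ∪ S.minimalsIn (S.classes \ (DlevelAux k).2))

/-- `Dlevel k = D_k(f)`. -/
def Dlevel (k : ℕ) : Set (Set ℂ) := (S.DlevelAux k).1

/-- Each connected component of `V` contains at most one critical point. -/
def OneCritPerComp : Prop :=
  ∀ c ∈ S.Crit, ∀ c' ∈ S.Crit,
    connectedComponentIn S.V c = connectedComponentIn S.V c' → c = c'

/-- Assumption (∗∗): if `c` does not combinatorially accumulate to `c'`, then
`f^j(c) ∉ P_0(c')` for all `j ≥ 1`. -/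
def StarStar : Prop :=
  ∀ c ∈ S.Crit, ∀ c' ∈ S.Crit, ¬ S.Acc c c' →
    ∀ j : ℕ, 1 ≤ j → S.f^[j] c ∉ S.piece 0 c'

/-- `K_f(x)`, the connected component of `K_f` containing `x`. -/
def Kcomp (x : ℂ) : Set ℂ := connectedComponentIn S.K x

/-- `P_{n+k}(c1)` is a child of `P_n(c2)`: `f^k(P_{n+k}(c1)) = P_n(c2)` and
`f^{k-1}` maps `P_{n+k-1}(f(c1))` conformally onto `P_n(c2)`. -/
def IsChild (c1 : ℂ) (k : ℕ) (n : ℕ) (c2 : ℂ) : Prop :=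
  1 ≤ k ∧ S.f^[k] '' S.piece (n+k) c1 = S.piece n c2 ∧
  Set.InjOn (S.f^[k-1]) (S.piece (n+k-1) (S.f c1)) ∧
  S.f^[k-1] '' S.piece (n+k-1) (S.f c1) = S.piece n c2

/-- `c` is persistently recurrent: for every `n ≥ 0` and every `c' ∈ [c]`,
`P_n(c')` has only finitely many children. -/
def PersistentlyRecurrent (c : ℂ) : Prop :=
  ∀ n : ℕ, ∀ c' ∈ S.cls c,
    {Q : Set ℂ | ∃ c1 ∈ S.cls c, ∃ k : ℕ, S.IsChild c1 k n c' ∧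
      Q = S.piece (n+k) c1}.Finite

/-- `Crit_n(f)`. -/
def CritN : Set ℂ := {c | c ∈ S.Crit ∧ ∀ c' ∈ S.Crit, ¬ S.Acc c c'}

/-- `Crit_e(f)`. -/
def CritE : Set ℂ := {c | c ∈ S.Crit ∧ ¬ S.Acc c c ∧ ∃ c' ∈ S.Crit, S.Acc c c'}

/-- `Crit_r(f)`. -/
def CritR : Set ℂ := {c | c ∈ S.Crit ∧ S.Acc c c ∧ ¬ S.PersistentlyRecurrent c}

/-- `Crit_p(f)`. -/
def CritP : Set ℂ := {c | c ∈ S.Crit ∧ S.Acc c c ∧ S.PersistentlyRecurrent c}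

end Setup

/-!
Two puzzle pieces are either nested or disjoint, so every connected component
of a finite union of pieces is itself a piece. The map `f` sends `P_{m+1}(x)` onto `P_m(f x)`:
properness makes the image relatively closed in `P_m(f x)`, and the open mapping theorem makes it
open. Hence, if `P_n(f^k z)` is the component of `X` containing `f^k z`, then `L_z(X) = P_{n+k}(z)`
and `f^i(L_z(X)) = P_{n+k-i}(f^i z)`. Suppose it meets the component `P_d(y)` of `X`. If
`d ≤ n + k - i`, then `f^i z ∈ X`, against the minimality of `k`. Otherwise
`P_d(y) ⊆ f^i(L_z(X))`, so `f^{k-i}(P_d(y)) = P_{d-k+i}(f^{k-i} y)` lies in `P_n(f^k z)`; niceness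
makes them equal, so the depth-`n` piece `P_n(f^k z)` lies in `f^{-(n+1)}(V)`. This is impossible:
applying `f^n` reduces it to a component of `V` contained in `U`, which would be closed in `ℂ`
because `closure U ⊆ V`, and `ℂ` has no nonempty bounded clopen subset.
-/

theorem mem_connectedComponentIn_of_mem_closure {α : Type*} [TopologicalSpace α] {A : Set α}
    {x w : α} (hw : w ∈ closure (connectedComponentIn A x)) (hwA : w ∈ A) :
    w ∈ connectedComponentIn A x := by
  by_cases hx : x ∈ A
  · have hpre : IsPreconnected (insert w (connectedComponentIn A x)) :=
      isPreconnected_connectedComponentIn.subset_closure (subset_insert _ _)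
        (insert_subset hw subset_closure)
    exact hpre.subset_connectedComponentIn (mem_insert_of_mem _ (mem_connectedComponentIn hx))
      (insert_subset hwA (connectedComponentIn_subset _ _)) (mem_insert w _)
  · rw [connectedComponentIn_eq_empty hx, closure_empty] at hw
    exact hw.elim

theorem IsClopen.eq_empty_of_isBounded {E : Type*} [NormedAddCommGroup E] [NormedSpace ℝ E]
    [Nontrivial E] {s : Set E} (hs : IsClopen s) (hb : Bornology.IsBounded s) : s = ∅ :=
  (isClopen_iff.mp hs).resolve_right fun h => NormedSpace.unbounded_univ ℝ E (h ▸ hb)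

theorem connectedComponentIn_sUnion_mem {α : Type*} [TopologicalSpace α] {P : Set (Set α)}
    (hfin : P.Finite) (hopen : ∀ Q ∈ P, IsOpen Q) (hconn : ∀ Q ∈ P, IsPreconnected Q)
    (hnest : ∀ A ∈ P, ∀ B ∈ P, (A ∩ B).Nonempty → A ⊆ B ∨ B ⊆ A) {y : α} (hy : y ∈ ⋃₀ P) :
    connectedComponentIn (⋃₀ P) y ∈ P := by
  obtain ⟨Q₀, hQ₀, hyQ₀⟩ := hy
  obtain ⟨M, ⟨hMP, hyM⟩, hmax⟩ :=
    (hfin.subset (sep_subset P (y ∈ ·))).exists_maximal ⟨Q₀, hQ₀, hyQ₀⟩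
  have hMsub : M ⊆ connectedComponentIn (⋃₀ P) y :=
    (hconn M hMP).subset_connectedComponentIn hyM (subset_sUnion_of_mem hMP)
  have hsubM : connectedComponentIn (⋃₀ P) y ⊆ M := by
    refine isPreconnected_connectedComponentIn.subset_of_closure_inter_subset (hopen M hMP)
      ⟨y, mem_connectedComponentIn ⟨Q₀, hQ₀, hyQ₀⟩, hyM⟩ ?_
    rintro w ⟨hwM, hwC⟩
    obtain ⟨Q, hQP, hwQ⟩ := connectedComponentIn_subset _ _ hwC
    rcases hnest Q hQP M hMP (mem_closure_iff.mp hwM Q (hopen Q hQP) hwQ) with hQM | hMQ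
    · exact hQM hwQ
    · exact hmax ⟨hQP, hMQ hyM⟩ hMQ hwQ
  exact hsubM.antisymm hMsub ▸ hMP

namespace Setup

variable (S : Setup)

lemma U_subset_V : S.U ⊆ S.V := subset_closure.trans S.hUV

lemma isBounded_V : Bornology.IsBounded S.V := by
  have hcover : S.V ⊆ ⋃ C ∈ {C : Set ℂ | ∃ x ∈ S.V, C = connectedComponentIn S.V x}, C :=
    fun x hx => mem_biUnion ⟨x, hx, rfl⟩ (mem_connectedComponentIn hx)
  refine ((Bornology.isBounded_biUnion S.hV_comp_finite).2 ?_).subset hcover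
  rintro C ⟨x, hx, rfl⟩
  exact (S.hV_jordan x hx).2.2.1

lemma preV_succ_subset (n : ℕ) : S.preV (n + 1) ⊆ S.preV n := by
  induction n with
  | zero => exact fun _ hx => S.U_subset_V hx.1
  | succ n ih => exact fun _ hx => ⟨hx.1, ih hx.2⟩

lemma preV_anti : Antitone S.preV := antitone_nat_of_succ_le S.preV_succ_subset

lemma preV_subset_V (n : ℕ) : S.preV n ⊆ S.V := S.preV_anti n.zero_le

lemma isOpen_preV (n : ℕ) : IsOpen (S.preV n) := by
  induction n with
  | zero => exact S.hV_open
  | succ n ih => exact S.hf_holo.continuousOn.isOpen_inter_preimage S.hU_open ih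

lemma preIm_mono {Y Y' : Set ℂ} (h : Y ⊆ Y') (k : ℕ) : S.preIm Y k ⊆ S.preIm Y' k := by
  induction k with
  | zero => exact h
  | succ k ih => exact inter_subset_inter_right _ (preimage_mono ih)

lemma preIm_add (Y : Set ℂ) (a b : ℕ) : S.preIm Y (a + b) = S.preIm (S.preIm Y a) b := by
  induction b with
  | zero => rfl
  | succ b ih => rw [← Nat.add_assoc, preIm, ih, preIm]

lemma preV_eq_preIm (n : ℕ) : S.preV n = S.preIm S.V n := by
  induction n with
  | zero => rfl
  | succ n ih => rw [preV, preIm, ih]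

lemma preV_add (n k : ℕ) : S.preV (n + k) = S.preIm (S.preV n) k := by
  rw [preV_eq_preIm, preV_eq_preIm, preIm_add]

lemma mem_preIm_iff {Y : Set ℂ} {k : ℕ} {x : ℂ} :
    x ∈ S.preIm Y k ↔ (∀ j < k, S.f^[j] x ∈ S.U) ∧ S.f^[k] x ∈ Y := by
  induction k generalizing x with
  | zero => simp [preIm]
  | succ k ih =>
    simp only [preIm, mem_inter_iff, mem_preimage, ih, Function.iterate_succ_apply,
      Nat.forall_lt_succ_left, Function.iterate_zero_apply, and_assoc]

lemma mapsTo_iterate_preIm (Y : Set ℂ) (k : ℕ) : MapsTo (S.f^[k]) (S.preIm Y k) Y :=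
  fun _ hx => (S.mem_preIm_iff.mp hx).2

lemma iterate_mem_preV {n k : ℕ} {x : ℂ} (hx : x ∈ S.preV (n + k)) : S.f^[k] x ∈ S.preV n :=
  S.mapsTo_iterate_preIm _ k (S.preV_add n k ▸ hx)

lemma isOpen_piece (n : ℕ) (x : ℂ) : IsOpen (S.piece n x) :=
  (S.isOpen_preV n).connectedComponentIn

lemma piece_subset_preV (n : ℕ) (x : ℂ) : S.piece n x ⊆ S.preV n :=
  connectedComponentIn_subset _ _

lemma mem_piece {n : ℕ} {x : ℂ} (hx : x ∈ S.preV n) : x ∈ S.piece n x :=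
  mem_connectedComponentIn hx

lemma piece_eq {n : ℕ} {x y : ℂ} (h : y ∈ S.piece n x) : S.piece n x = S.piece n y :=
  connectedComponentIn_eq h

lemma piece_subset_piece {a b : ℕ} (hab : a ≤ b) {x y : ℂ}
    (h : (S.piece b x ∩ S.piece a y).Nonempty) : S.piece b x ⊆ S.piece a y := by
  obtain ⟨u, hux, huy⟩ := h
  rw [S.piece_eq huy]
  exact isPreconnected_connectedComponentIn.subset_connectedComponentIn hux
    ((S.piece_subset_preV b x).trans (S.preV_anti hab))

lemma not_closure_piece_subset_preV {n : ℕ} {x : ℂ} (hx : x ∈ S.preV n) :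
    ¬ closure (S.piece n x) ⊆ S.preV n := by
  intro h
  have hclosed : IsClosed (S.piece n x) :=
    isClosed_of_closure_subset fun w hw => mem_connectedComponentIn_of_mem_closure hw (h hw)
  have hempty := IsClopen.eq_empty_of_isBounded ⟨hclosed, S.isOpen_piece n x⟩
    (S.isBounded_V.subset ((S.piece_subset_preV n x).trans (S.preV_subset_V n)))
  exact (hempty ▸ S.mem_piece hx : x ∈ (∅ : Set ℂ))

lemma closure_image_inter_V_subset {A : Set ℂ} (hA : A ⊆ S.U) :
    closure (S.f '' A) ∩ S.V ⊆ S.f '' (S.U ∩ closure A) := by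
  rintro y ⟨hy, hyV⟩
  obtain ⟨r, hr, hball⟩ := Metric.nhds_basis_closedBall.mem_iff.1 (S.hV_open.mem_nhds hyV)
  have hK : IsCompact (S.U ∩ S.f ⁻¹' Metric.closedBall y r ∩ closure A) :=
    (S.hf_proper _ hball (isCompact_closedBall y r)).inter_right isClosed_closure
  have hclosed : IsClosed (S.f '' (S.U ∩ S.f ⁻¹' Metric.closedBall y r ∩ closure A)) :=
    (hK.image_of_continuousOn (S.hf_holo.continuousOn.mono fun _ hw => hw.1.1)).isClosed
  have hsub : Metric.ball y r ∩ S.f '' A ⊆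
      S.f '' (S.U ∩ S.f ⁻¹' Metric.closedBall y r ∩ closure A) := by
    rintro _ ⟨hb, a, ha, rfl⟩
    exact ⟨a, ⟨⟨hA ha, Metric.ball_subset_closedBall hb⟩, subset_closure ha⟩, rfl⟩
  obtain ⟨w, ⟨⟨hwU, -⟩, hwA⟩, rfl⟩ := hclosed.closure_subset_iff.2 hsub
    (Metric.isOpen_ball.inter_closure ⟨Metric.mem_ball_self hr, hy⟩)
  exact ⟨w, ⟨hwU, hwA⟩, rfl⟩

lemma isOpen_image_piece {m : ℕ} {x : ℂ} (hx : x ∈ S.preV (m + 1)) :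
    IsOpen (S.f '' S.piece (m + 1) x) := by
  have hWU : S.piece (m + 1) x ⊆ S.U := fun _ hw => (S.piece_subset_preV _ _ hw).1
  rcases ((S.hf_holo.analyticOnNhd S.hU_open).mono hWU).is_constant_or_isOpen
    isPreconnected_connectedComponentIn with ⟨c, hc⟩ | hopen
  · -- the fibre of a proper map is compact, so a piece on which `f` is constant would be closed
    have hfc : S.f x = c := hc x (S.mem_piece hx)
    have hfib : IsClosed (S.U ∩ S.f ⁻¹' {c}) :=
      (S.hf_proper _ (singleton_subset_iff.2 (hfc ▸ S.preV_subset_V m hx.2))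
        isCompact_singleton).isClosed
    have hcl : closure (S.piece (m + 1) x) ⊆ S.U ∩ S.f ⁻¹' {c} :=
      hfib.closure_subset_iff.2 fun w hw => ⟨hWU hw, hc w hw⟩
    refine (S.not_closure_piece_subset_preV hx fun w hw => ⟨(hcl hw).1, ?_⟩).elim
    rw [mem_preimage, (hcl hw).2, ← hfc]
    exact hx.2
  · exact hopen _ subset_rfl (S.isOpen_piece _ _)

lemma image_piece {m : ℕ} {x : ℂ} (hx : x ∈ S.preV (m + 1)) :
    S.f '' S.piece (m + 1) x = S.piece m (S.f x) := by
  have hWU : S.piece (m + 1) x ⊆ S.U := fun _ hw => (S.piece_subset_preV _ _ hw).1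
  refine subset_antisymm ?_ ?_
  · refine (isPreconnected_connectedComponentIn.image _
      (S.hf_holo.continuousOn.mono hWU)).subset_connectedComponentIn
      (mem_image_of_mem _ (S.mem_piece hx)) ?_
    rintro _ ⟨w, hw, rfl⟩
    exact (S.piece_subset_preV _ _ hw).2
  · refine isPreconnected_connectedComponentIn.subset_of_closure_inter_subset
      (S.isOpen_image_piece hx) ⟨S.f x, S.mem_piece hx.2, mem_image_of_mem _ (S.mem_piece hx)⟩ ?_
    rintro y ⟨hycl, hyP⟩
    have hym : y ∈ S.preV m := S.piece_subset_preV _ _ hyP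
    obtain ⟨w, ⟨hwU, hwcl⟩, rfl⟩ :=
      S.closure_image_inter_V_subset hWU ⟨hycl, S.preV_subset_V m hym⟩
    exact mem_image_of_mem _ (mem_connectedComponentIn_of_mem_closure hwcl ⟨hwU, hym⟩)

lemma image_iterate_piece {m i : ℕ} {x : ℂ} (hx : x ∈ S.preV (m + i)) :
    S.f^[i] '' S.piece (m + i) x = S.piece m (S.f^[i] x) := by
  induction i generalizing m with
  | zero => simp
  | succ i ih =>
    rw [show m + (i + 1) = m + 1 + i by omega] at hx ⊢
    rw [Function.iterate_succ', Set.image_comp, ih hx, S.image_piece (S.iterate_mem_preV hx)]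
    rfl

lemma not_piece_subset_preV_succ {n : ℕ} {x : ℂ} (hx : x ∈ S.preV n) :
    ¬ S.piece n x ⊆ S.preV (n + 1) := by
  induction n generalizing x with
  | zero =>
    intro hsub
    exact S.not_closure_piece_subset_preV hx
      ((closure_mono fun w hw => (hsub hw).1).trans S.hUV)
  | succ n ih =>
    intro hsub
    refine ih hx.2 ?_
    rw [← S.image_piece hx]
    rintro _ ⟨w, hw, rfl⟩
    exact (hsub hw).2

lemma exists_connectedComponentIn_eq_piece {X : Set ℂ} (hX : S.IsPieceUnion X) {y : ℂ}
    (hy : y ∈ X) : ∃ d, connectedComponentIn X y = S.piece d y := by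
  obtain ⟨P, hPfin, hPpiece, rfl⟩ := hX
  have hmem := connectedComponentIn_sUnion_mem hPfin
    (fun Q hQ => by obtain ⟨d, x, -, rfl⟩ := hPpiece Q hQ; exact S.isOpen_piece d x)
    (fun Q hQ => by
      obtain ⟨d, x, -, rfl⟩ := hPpiece Q hQ
      exact isPreconnected_connectedComponentIn)
    (fun A hA B hB hAB => by
      obtain ⟨a, x, -, rfl⟩ := hPpiece A hA
      obtain ⟨b, x', -, rfl⟩ := hPpiece B hB
      rcases le_total a b with hab | hba
      · exact Or.inr (S.piece_subset_piece hab (inter_comm _ _ ▸ hAB))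
      · exact Or.inl (S.piece_subset_piece hba hAB)) hy
  obtain ⟨d, x, -, hQ⟩ := hPpiece _ hmem
  have hyQ : y ∈ connectedComponentIn (S.preV d) x := hQ ▸ mem_connectedComponentIn hy
  exact ⟨d, hQ.trans (S.piece_eq hyQ)⟩

lemma mem_preV_of_connectedComponentIn_eq_piece {X : Set ℂ} {y : ℂ} {d : ℕ} (hy : y ∈ X)
    (h : connectedComponentIn X y = S.piece d y) : y ∈ S.preV d :=
  S.piece_subset_preV d y (h ▸ mem_connectedComponentIn hy)

lemma depth_le_of_image_subset {X : Set ℂ} (hnice : S.Nice X) {y w : ℂ} (hy : y ∈ X)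
    (hw : w ∈ X) {d n j : ℕ} (hCy : connectedComponentIn X y = S.piece d y)
    (hCw : connectedComponentIn X w = S.piece n w) (hj : 1 ≤ j)
    (himg : S.f^[j] '' S.piece d y ⊆ S.piece n w) : d ≤ n + j := by
  by_contra! hlt
  obtain ⟨m, rfl⟩ : ∃ m, d = m + j := ⟨d - j, by omega⟩
  have heq : S.piece m (S.f^[j] y) = S.piece n w := by
    rw [← S.image_iterate_piece (S.mem_preV_of_connectedComponentIn_eq_piece hy hCy)]
    by_contra hne
    exact hnice y hy j hj ⟨w, hw, by rw [hCy, hCw]; exact himg.ssubset_of_ne hne⟩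
  exact S.not_piece_subset_preV_succ (S.mem_preV_of_connectedComponentIn_eq_piece hw hCw)
    (heq ▸ (S.piece_subset_preV _ _).trans (S.preV_anti (by omega)))

lemma iterate_mem_U_of_isLandingTime {X : Set ℂ} {z : ℂ} (hz : z ∈ S.D X \ X) {k : ℕ}
    (hk : S.IsLandingTime X z k) : ∀ j < k, S.f^[j] z ∈ S.U := by
  obtain ⟨m, hm⟩ := mem_iUnion.mp hz.1
  rw [mem_preIm_iff] at hm
  have hkm : k ≤ m := by
    by_contra! hmk
    rcases Nat.eq_zero_or_pos m with rfl | hm0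
    · exact hz.2 hm.2
    · exact hk.2.2 m hm0 hmk hm.2
  exact fun j hj => hm.1 j (by omega)

lemma preIm_piece_subset (n k : ℕ) (w : ℂ) : S.preIm (S.piece n w) k ⊆ S.preV (n + k) :=
  S.preV_add n k ▸ S.preIm_mono (S.piece_subset_preV n w) k

lemma connectedComponentIn_preIm_piece {n k : ℕ} {w z : ℂ}
    (hz : z ∈ S.preIm (S.piece n w) k) :
    connectedComponentIn (S.preIm (S.piece n w) k) z = S.piece (n + k) z := by
  have hzn : z ∈ S.preV (n + k) := S.preIm_piece_subset n k w hz
  refine subset_antisymm (connectedComponentIn_mono z (S.preIm_piece_subset n k w)) ?_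
  refine isPreconnected_connectedComponentIn.subset_connectedComponentIn (S.mem_piece hzn)
    fun t ht => ?_
  have htn : t ∈ S.preIm (S.preV n) k := S.preV_add n k ▸ S.piece_subset_preV _ _ ht
  refine S.mem_preIm_iff.2 ⟨(S.mem_preIm_iff.1 htn).1, ?_⟩
  rw [S.piece_eq (S.mapsTo_iterate_preIm _ k hz), ← S.image_iterate_piece hzn]
  exact mem_image_of_mem _ ht

end Setup

/-- For a map in the set-up and a nice finite union `X` of puzzle
pieces, for every `z ∈ D(X) ∖ X` and every `0 ≤ i < k(z)`,
`f^i(L_z(X)) ∩ X = ∅`. -/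
theorem stmt_1 (S : Setup) (X : Set ℂ) (hX : S.IsPieceUnion X) (hnice : S.Nice X)
    (z : ℂ) (hz : z ∈ S.D X \ X) (k : ℕ) (hk : S.IsLandingTime X z k) :
    ∀ i < k, (S.f^[i] '' S.landComp X z k) ∩ X = ∅ := by
  intro i hik
  obtain ⟨l, rfl⟩ : ∃ l, k = i + l := ⟨k - i, by omega⟩
  have hU := S.iterate_mem_U_of_isLandingTime hz hk
  obtain ⟨-, hkX, hkmin⟩ := hk
  have hiX : S.f^[i] z ∉ X := by
    rcases Nat.eq_zero_or_pos i with rfl | hi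
    · exact hz.2
    · exact hkmin i hi hik
  obtain ⟨n, hCk⟩ := S.exists_connectedComponentIn_eq_piece hX hkX
  have hzL : z ∈ S.preIm (S.piece n (S.f^[i + l] z)) (i + l) :=
    S.mem_preIm_iff.2 ⟨hU, S.mem_piece (S.mem_preV_of_connectedComponentIn_eq_piece hkX hCk)⟩
  have hzn : z ∈ S.preV (n + l + i) := by
    rw [show n + l + i = n + (i + l) by omega]
    exact S.preIm_piece_subset _ _ _ hzL
  have hiz : S.f^[i] z ∈ S.preV (n + l) := S.iterate_mem_preV hzn
  rw [Setup.landComp, hCk, S.connectedComponentIn_preIm_piece hzL,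
    show n + (i + l) = n + l + i by omega, S.image_iterate_piece hzn, eq_empty_iff_forall_notMem]
  rintro y ⟨hyQ, hyX⟩
  obtain ⟨d, hCy⟩ := S.exists_connectedComponentIn_eq_piece hX hyX
  have hyd := S.mem_preV_of_connectedComponentIn_eq_piece hyX hCy
  rcases le_or_gt d (n + l) with hd | hd
  · refine hiX (connectedComponentIn_subset X y ?_)
    rw [hCy]
    exact S.piece_subset_piece hd ⟨y, hyQ, S.mem_piece hyd⟩ (S.mem_piece hiz)
  · have himg : S.f^[l] '' S.piece d y ⊆ S.piece n (S.f^[i + l] z) := by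
      rw [add_comm i l, Function.iterate_add_apply, ← S.image_iterate_piece hiz]
      exact image_mono (S.piece_subset_piece hd.le ⟨y, S.mem_piece hyd, hyQ⟩)
    have := S.depth_le_of_image_subset hnice hyX hkX hCy hCk (by omega) himg
    omega
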